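/- In the convolution algebra R* = (R_{mn}(q))*, the elements α = Σ_{i=0}^{mn-1} ξ^i overline{g^i} and β = Σ_{i=0}^{mn-1} overline{g^i x} satisfy α^{mn} = ε, β^n = 0, and β*α = ξ·α*β, where powers are convolution powers and ε is the counit of R (the unit of R*). -/

import Mathlib

open scoped TensorProduct

/-- The convolution product on the dual `R* = Hom_K(R, K)` of a coalgebra:
`(f * h)(a) = Σ f(a₍₁₎) h(a₍₂₎)`. -/
noncomputable def conv (K : Type*) {R : Type*} [CommRing K] [AddCommMonoid R]
    [Module K R] [Coalgebra K R] (f h : R →ₗ[K] K) : R →ₗ[K] K :=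
  LinearMap.mul' K K ∘ₗ TensorProduct.map f h ∘ₗ Coalgebra.comul

/-- Convolution powers in `R*`; the zeroth power is the unit `ε` of `R*`. -/
noncomputable def convPow (K : Type*) {R : Type*} [CommRing K] [AddCommMonoid R]
    [Module K R] [Coalgebra K R] (f : R →ₗ[K] K) : ℕ → (R →ₗ[K] K)
  | 0 => Coalgebra.counit
  | j + 1 => conv K f (convPow K f j)

/-- Auxiliary: the tensors `x^k ⊗ (g^k x^l)` in `R ⊗ R`. -/
noncomputable def radfordT {K R : Type*} [CommRing K] [Ring R] [Algebra K R]
    (g x : R) (k l : ℕ) : R ⊗[K] R := (x ^ k) ⊗ₜ[K] (g ^ k * x ^ l)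

/-- in the convolution algebra `R* = (R_{mn}(q))*`, the elements
`α = Σ_i ξ^i overline{g^i}` and `β = Σ_i overline{g^i x}` satisfy
`α^{mn} = ε`, `β^n = 0` and `β * α = ξ · α * β`. -/
theorem radford_dual_relations (K : Type*) [Field K] [IsAlgClosed K]
    (m n : ℕ) (hm : 2 ≤ m) (hn : 1 ≤ n) (hchar : ¬ (ringChar K ∣ m * n))
    (q : K) (hq : IsPrimitiveRoot q n)
    (ξ : K) (hξ : IsPrimitiveRoot ξ (m * n)) (hξm : ξ ^ m = q)
    (R : Type*) [Ring R] [HopfAlgebra K R] (g x : R)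
    (hgo : g ^ (m * n) = 1) (hxn : x ^ n = g ^ n - 1) (hxg : x * g = q • (g * x))
    (B : Module.Basis (Fin (m * n) × Fin n) K R)
    (hB : ∀ p : Fin (m * n) × Fin n, B p = g ^ (p.1 : ℕ) * x ^ (p.2 : ℕ))
    (hcg : Coalgebra.comul (R := K) g = g ⊗ₜ[K] g)
    (hcx : Coalgebra.comul (R := K) x = x ⊗ₜ[K] g + 1 ⊗ₜ[K] x)
    (heg : Coalgebra.counit (R := K) g = (1 : K))
    (hex : Coalgebra.counit (R := K) x = (0 : K))
    (α β : R →ₗ[K] K)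
    (hα : ∀ (i : Fin (m * n)) (j : Fin n),
      α (g ^ (i : ℕ) * x ^ (j : ℕ)) = if (j : ℕ) = 0 then ξ ^ (i : ℕ) else 0)
    (hβ : ∀ (i : Fin (m * n)) (j : Fin n),
      β (g ^ (i : ℕ) * x ^ (j : ℕ)) = if (j : ℕ) = 1 then 1 else 0) :
    convPow K α (m * n) = Coalgebra.counit ∧
    convPow K β n = 0 ∧
    conv K β α = ξ • conv K α β := by
  have hmn : 0 < m * n := Nat.mul_pos (by omega) hn
  have hgred : ∀ a : ℕ, g ^ a = g ^ (a % (m * n)) := by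
    intro a
    conv_lhs => rw [← Nat.div_add_mod a (m * n)]
    rw [pow_add, pow_mul, hgo, one_pow, one_mul]
  have hξ1 : ξ ^ (m * n) = 1 := hξ.pow_eq_one
  have hξred : ∀ a : ℕ, ξ ^ a = ξ ^ (a % (m * n)) := by
    intro a
    conv_lhs => rw [← Nat.div_add_mod a (m * n)]
    rw [pow_add, pow_mul, hξ1, one_pow, one_mul]
  have hα' : ∀ a b : ℕ, b < n → α (g ^ a * x ^ b) = if b = 0 then ξ ^ a else 0 := by
    intro a b hb
    have h := hα ⟨a % (m * n), Nat.mod_lt a hmn⟩ ⟨b, hb⟩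
    simp only at h
    rw [hgred a, h, hξred a]
  have hβ' : ∀ a b : ℕ, b < n → β (g ^ a * x ^ b) = if b = 1 then 1 else 0 := by
    intro a b hb
    have h := hβ ⟨a % (m * n), Nat.mod_lt a hmn⟩ ⟨b, hb⟩
    simp only at h
    rw [hgred a, h]
  have hε' : ∀ a b : ℕ,
      Coalgebra.counit (R := K) (g ^ a * x ^ b) = if b = 0 then 1 else 0 := by
    intro a b
    rw [Bialgebra.counit_mul, Bialgebra.counit_pow, Bialgebra.counit_pow, heg, hex,
      one_pow, one_mul, zero_pow_eq]
  -- commutation of powers of x with g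
  have hxgpow : ∀ t : ℕ, x ^ t * g = q ^ t • (g * x ^ t) := by
    intro t
    induction t with
    | zero => simp
    | succ t ih =>
      rw [pow_succ, mul_assoc, hxg, mul_smul_comm, ← mul_assoc, ih, smul_mul_assoc,
        mul_assoc, ← pow_succ, smul_smul, ← pow_succ']
  -- the q-binomial shape of Δ(x^j)
  have key : ∀ j : ℕ, ∃ c : ℕ → K, c 0 = 1 ∧ c 1 = (∑ t ∈ Finset.range j, q ^ t) ∧
      (∀ k : ℕ, j < k → c k = 0) ∧
      Coalgebra.comul (R := K) (x ^ j) =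
        ∑ k ∈ Finset.range (j+1), c k • radfordT (K := K) g x k (j - k) := by
    intro j
    induction j with
    | zero =>
      refine ⟨fun k => if k = 0 then 1 else 0, by simp, by simp,
        fun k hk => if_neg (by omega), ?_⟩
      simp [radfordT, Algebra.TensorProduct.one_def, Bialgebra.comul_one]
    | succ j ih =>
      obtain ⟨c, hc0, hc1, hctop, hcom⟩ := ih
      refine ⟨fun k => if k = 0 then c 0 else c k + q ^ (j + 1 - k) * c (k - 1),
        by simp [hc0], ?_, ?_, ?_⟩
      · simp [hc1, hc0, Finset.sum_range_succ]
      · intro k hk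
        have hk0 : k ≠ 0 := by omega
        simp only [if_neg hk0]
        rw [hctop k (by omega), hctop (k-1) (by omega)]
        ring
      · rw [pow_succ, Bialgebra.comul_mul, hcom, hcx, mul_add, Finset.sum_mul, Finset.sum_mul]
        have e1 : ∀ k ∈ Finset.range (j+1),
            (c k • radfordT (K := K) g x k (j - k)) * (x ⊗ₜ[K] g)
            = (c k * q ^ (j - k)) • radfordT (K := K) g x (k+1) (j - k) := by
          intro k hk
          simp only [radfordT]
          rw [smul_mul_assoc, Algebra.TensorProduct.tmul_mul_tmul, ← pow_succ,
            mul_assoc, hxgpow, mul_smul_comm, TensorProduct.tmul_smul, smul_smul,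
            ← mul_assoc, ← pow_succ]
        have e2 : ∀ k ∈ Finset.range (j+1),
            (c k • radfordT (K := K) g x k (j - k)) * ((1:R) ⊗ₜ[K] x)
            = c k • radfordT (K := K) g x k (j + 1 - k) := by
          intro k hk
          have hkj : k ≤ j := Nat.lt_succ_iff.mp (Finset.mem_range.mp hk)
          simp only [radfordT]
          rw [smul_mul_assoc, Algebra.TensorProduct.tmul_mul_tmul, mul_one,
            mul_assoc, ← pow_succ, show j - k + 1 = j + 1 - k from by omega]
        rw [Finset.sum_congr rfl e1, Finset.sum_congr rfl e2]
        rw [Finset.sum_range_succ' (fun k => (if k = 0 then c 0 else c k + q ^ (j + 1 - k) * c (k - 1)) • radfordT (K := K) g x k (j + 1 - k))]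
        have e3 : ∀ k ∈ Finset.range (j+1),
            (if k + 1 = 0 then c 0 else c (k+1) + q ^ (j + 1 - (k+1)) * c (k+1-1)) • radfordT (K := K) g x (k+1) (j + 1 - (k+1))
            = c (k+1) • radfordT (K := K) g x (k+1) (j - k)
              + (c k * q ^ (j - k)) • radfordT (K := K) g x (k+1) (j - k) := by
          intro k hk
          have h1 : j + 1 - (k+1) = j - k := by omega
          rw [if_neg k.succ_ne_zero, h1, add_smul, Nat.add_sub_cancel, mul_comm (q ^ (j-k))]
        rw [Finset.sum_congr rfl e3, Finset.sum_add_distrib, if_pos rfl]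
        have hsum2 : ∑ k ∈ Finset.range (j+1), c (k+1) • radfordT (K := K) g x (k+1) (j - k)
            + c 0 • radfordT (K := K) g x 0 (j + 1 - 0)
            = ∑ k ∈ Finset.range (j+1), c k • radfordT (K := K) g x k (j + 1 - k) := by
          have h := Finset.sum_range_succ' (fun k => c k • radfordT (K := K) g x k (j + 1 - k)) (j+1)
          rw [Finset.sum_range_succ] at h
          rw [hctop (j+1) (by omega), zero_smul, add_zero] at h
          simp only [Nat.succ_sub_succ] at h
          exact h.symm
        rw [add_right_comm, hsum2, add_comm]
  -- the resulting convolution formula on basis monomials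
  have hconv : ∀ j : ℕ, ∃ c : ℕ → K, c 0 = 1 ∧ c 1 = (∑ t ∈ Finset.range j, q ^ t) ∧
      (∀ k : ℕ, j < k → c k = 0) ∧
      ∀ (f h : R →ₗ[K] K) (i : ℕ), conv K f h (g ^ i * x ^ j)
        = ∑ k ∈ Finset.range (j+1), c k * (f (g ^ i * x ^ k) * h (g ^ (i + k) * x ^ (j - k))) := by
    intro j
    obtain ⟨c, hc0, hc1, hctop, hcom⟩ := key j
    refine ⟨c, hc0, hc1, hctop, fun f h i => ?_⟩
    have hcval : Coalgebra.comul (R := K) (g ^ i * x ^ j)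
        = ∑ k ∈ Finset.range (j+1), c k • (((g ^ i * x ^ k) ⊗ₜ[K] (g ^ (i + k) * x ^ (j - k))) : R ⊗[K] R) := by
      rw [Bialgebra.comul_mul, Bialgebra.comul_pow, hcg, hcom,
        Algebra.TensorProduct.tmul_pow, Finset.mul_sum]
      refine Finset.sum_congr rfl fun k hk => ?_
      rw [mul_smul_comm]
      simp only [radfordT]
      rw [Algebra.TensorProduct.tmul_mul_tmul, ← mul_assoc, ← pow_add]
    simp only [conv, LinearMap.comp_apply, hcval, map_sum, map_smul,
      TensorProduct.map_tmul, LinearMap.mul'_apply, smul_eq_mul]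
  -- powers of α
  have hαpow : ∀ (t i j : ℕ), j < n →
      convPow K α t (g ^ i * x ^ j) = if j = 0 then ξ ^ (t * i) else 0 := by
    intro t
    induction t with
    | zero =>
      intro i j hj
      simp only [convPow]
      rw [hε' i j]
      simp
    | succ t ih =>
      intro i j hj
      obtain ⟨c, hc0, hc1, hctop, hcv⟩ := hconv j
      simp only [convPow]
      rw [hcv]
      rw [Finset.sum_eq_single 0]
      · rw [hc0, hα' i 0 (by omega), if_pos rfl, Nat.add_zero, Nat.sub_zero, ih i j hj]
        by_cases hj0 : j = 0
        · simp only [if_pos hj0]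
          rw [one_mul, ← pow_add, Nat.succ_mul, Nat.add_comm (t * i) i]
        · simp [hj0]
      · intro k hk hk0
        rw [hα' i k (lt_of_le_of_lt (Nat.lt_succ_iff.mp (Finset.mem_range.mp hk)) hj),
          if_neg hk0]
        ring
      · intro h
        exact absurd (Finset.mem_range.mpr (Nat.succ_pos j)) h
  -- powers of β
  have hβpow : ∀ (t i j : ℕ), j < n → j < t → convPow K β t (g ^ i * x ^ j) = 0 := by
    intro t
    induction t with
    | zero => intro i j _ hj; omega
    | succ t ih =>
      intro i j hj hjt
      obtain ⟨c, hc0, hc1, hctop, hcv⟩ := hconv j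
      simp only [convPow]
      rw [hcv]
      refine Finset.sum_eq_zero fun k hk => ?_
      have hkj : k ≤ j := Nat.lt_succ_iff.mp (Finset.mem_range.mp hk)
      by_cases hk1 : k = 1
      · subst hk1
        rw [ih (i + 1) (j - 1) (by omega) (by omega)]
        ring
      · rw [hβ' i k (by omega), if_neg hk1]
        ring
  refine ⟨?_, ?_, ?_⟩
  · refine B.ext fun p => ?_
    obtain ⟨i, j⟩ := p
    rw [hB]
    rw [hαpow (m * n) i j j.isLt, hε' i j, pow_mul, hξ1, one_pow]
  · refine B.ext fun p => ?_
    obtain ⟨i, j⟩ := p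
    rw [hB]
    rw [hβpow n i j j.isLt j.isLt, LinearMap.zero_apply]
  · refine B.ext fun p => ?_
    obtain ⟨i, j⟩ := p
    rw [hB]
    show (conv K β α) (g ^ (i : ℕ) * x ^ (j : ℕ)) = (ξ • conv K α β) (g ^ (i : ℕ) * x ^ (j : ℕ))
    obtain ⟨c, hc0, hc1, hctop, hcv⟩ := hconv (j : ℕ)
    have hjn : (j : ℕ) < n := j.isLt
    rw [LinearMap.smul_apply, smul_eq_mul, hcv β α, hcv α β]
    rw [Finset.sum_eq_single 1, Finset.sum_eq_single 0]
    · simp only [Nat.add_zero, Nat.sub_zero]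
      rw [hc0, hα' (i : ℕ) 0 (by omega), if_pos rfl, hβ' (i : ℕ) (j : ℕ) hjn, one_mul]
      rcases eq_or_ne (j : ℕ) 1 with hj1 | hj1
      · have hb1 : β (g ^ (i : ℕ) * x ^ 1) = 1 := by
          rw [hβ' (i : ℕ) 1 (by omega)]; simp
        have ha0 : α (g ^ ((i : ℕ) + 1) * x ^ 0) = ξ ^ ((i : ℕ) + 1) := by
          rw [hα' ((i : ℕ) + 1) 0 (by omega)]; simp
        have hc1' : c 1 = 1 := by rw [hc1, hj1]; simp
        rw [hj1, show (1 : ℕ) - 1 = 0 from rfl, hb1, ha0, hc1', if_pos rfl, pow_succ]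
        ring
      · rcases eq_or_ne (j : ℕ) 0 with hj0 | hj0
        · rw [hctop 1 (by omega), if_neg (by omega)]
          ring
        · rw [hα' ((i : ℕ) + 1) ((j : ℕ) - 1) (by omega), if_neg (by omega), if_neg hj1]
          ring
    · intro k hk hk0
      rw [hα' (i : ℕ) k (lt_of_le_of_lt (Nat.lt_succ_iff.mp (Finset.mem_range.mp hk)) hjn),
        if_neg hk0]
      ring
    · intro h
      exact absurd (Finset.mem_range.mpr (Nat.succ_pos _)) h
    · intro k hk hk1
      rw [hβ' (i : ℕ) k (lt_of_le_of_lt (Nat.lt_succ_iff.mp (Finset.mem_range.mp hk)) hjn),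
        if_neg hk1]
      ring
    · intro h
      rw [hctop 1 (by simpa using h)]
      ring
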